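/- For any full component C with terminal set R_C and any weighted complete graph M on a vertex set containing R_C, the save of C decomposes into save edges: save(M,C) = d(MST(M)) − d(MST(M/C)) equals the total cost of the |R_C| − 1 edges removed when iteratively, for pairs covering R_C, replacing the maximum-cost edge save_M(u,v) on the tree path by a zero-cost edge {u,v}. -/

import Mathlib

open Finset SimpleGraph

variable {V : Type*} [Fintype V] [DecidableEq V]

/-- Total cost of a finite set of edges. -/
def edgeCost (w : Sym2 V → ℝ) (T : Finset (Sym2 V)) : ℝ := ∑ e ∈ T, w e

/-- `T` is the edge set of a tree spanning exactly the vertex set `A`. -/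
def IsTreeOn (A : Finset V) (T : Finset (Sym2 V)) : Prop :=
  (∀ e ∈ T, ∀ x ∈ e, x ∈ A) ∧ (∀ e ∈ T, ¬ e.IsDiag) ∧ T.card + 1 = A.card ∧
    ∀ u ∈ A, ∀ v ∈ A, (SimpleGraph.fromEdgeSet (↑T : Set (Sym2 V))).Reachable u v

/-- Cost of a minimum spanning tree on vertex set `A` of the complete graph weighted by `w`. -/
noncomputable def mstCostOn (w : Sym2 V → ℝ) (A : Finset V) : ℝ :=
  sInf (edgeCost w '' {T | IsTreeOn A T})

/-- All (non-loop) pairs inside `S`. -/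
def Rpairs (S : Finset V) : Set (Sym2 V) := {e | ∃ u ∈ S, ∃ v ∈ S, u ≠ v ∧ e = s(u, v)}

open Classical in
/-- Contracting the vertex set `S`: add zero-cost edges between all pairs of `S`. -/
noncomputable def contractWeight (w : Sym2 V → ℝ) (S : Finset V) : Sym2 V → ℝ :=
  fun e => if e ∈ Rpairs S then 0 else w e

/-- `save(M, C)` where `M` is the complete graph on `A` weighted by `w` and
`S` is the terminal set of the full component `C`. -/
noncomputable def saveOn (w : Sym2 V → ℝ) (A S : Finset V) : ℝ :=
  mstCostOn w A - mstCostOn (contractWeight w S) A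

/-- Vertices touched by an edge set. -/
def supportOf (T : Finset (Sym2 V)) : Finset V :=
  Finset.univ.filter (fun v => ∃ e ∈ T, v ∈ e)

/-- Degree of `v` in the edge set `T`. -/
def degIn (T : Finset (Sym2 V)) (v : V) : ℕ := (T.filter (fun e => v ∈ e)).card

/-- `E` is a full component with vertex set `S` and terminal set `R`:
a tree on `S` whose set of leaves is exactly `R`. -/
def IsFullComponent (R S : Finset V) (E : Finset (Sym2 V)) : Prop :=
  IsTreeOn S E ∧ R ⊆ S ∧ ∀ v ∈ S, (degIn E v = 1 ↔ v ∈ R)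

/-- The terminals of the component with edge set `E'` w.r.t. the global terminal set `R`. -/
def compR (R : Finset V) (E' : Finset (Sym2 V)) : Finset V := supportOf E' ∩ R

/-- `E'` is a full component w.r.t. the terminal set `R`. -/
def IsFullComponentOf (R : Finset V) (E' : Finset (Sym2 V)) : Prop :=
  IsFullComponent (compR R E') (supportOf E') E'

/-- A Steiner tree for terminal set `R`: a tree containing all terminals. -/
def IsSteinerTree (R : Finset V) (T : Finset (Sym2 V)) : Prop :=
  IsTreeOn (supportOf T ∪ R) T

/-- `P` is a decomposition of the Steiner tree `T` into full components,
each with at most `k` terminals. -/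
def KDecomposition (k : ℕ) (R : Finset V) (T : Finset (Sym2 V))
    (P : Finset (Finset (Sym2 V))) : Prop :=
  (∀ E' ∈ P, IsFullComponentOf R E' ∧ (compR R E').card ≤ k) ∧
  (∀ e ∈ T, ∃! E', E' ∈ P ∧ e ∈ E') ∧ (∀ E' ∈ P, E' ⊆ T)

/-- `T` is a `k`-restricted Steiner tree. -/
def IsKRestricted (k : ℕ) (R : Finset V) (T : Finset (Sym2 V)) : Prop :=
  ∃ P, KDecomposition k R T P

/-! Let `w'` be the contracted weight. Among the `w'`-minimum spanning trees choose one, `Ts`,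
maximising the number of its edges that join two terminals (counted twice) or lie in `T`. An
exchange argument shows that the terminal edges of `Ts` connect `S`, so by acyclicity there are
exactly `|S| - 1` of them, and that every other edge of `Ts` belongs to `T`. Then `Ts` arises from
`T` by deleting the set `D` of edges of `T` outside those non-terminal edges and inserting the
terminal edges, whose `w'`-cost is zero; hence `w(T) - w'(Ts) = w(D)` and `|D| = |S| - 1`. -/

set_option linter.unusedSectionVars false

namespace SimpleGraph

variable {W : Type*} {G H : SimpleGraph W}

lemma IsAcyclic.isTree_of_card_edgeSet [Finite W] (hG : G.IsAcyclic)
    (hcard : Nat.card G.edgeSet + 1 = Nat.card W) : G.IsTree := by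
  have : Nonempty W := (Nat.card_pos_iff.1 (by omega)).1
  obtain ⟨F, hGF, hF⟩ := (⊤ : SimpleGraph W).exists_maximal_isAcyclic_of_le_isAcyclic le_top hG
  have hFtree : F.IsTree := (connected_top.maximal_le_isAcyclic_iff_isTree le_top).1 hF
  have hFcard := (isTree_iff_connected_and_card.1 hFtree).2
  suffices G = F from this ▸ hFtree
  refine edgeSet_inj.1 (Set.eq_of_subset_of_ncard_le (edgeSet_subset_edgeSet.2 hGF) ?_)
  rw [← Nat.card_coe_set_eq, ← Nat.card_coe_set_eq]
  omega

lemma IsAcyclic.card_edgeSet_add_one [Finite W] {s : Set W} (hG : G.IsAcyclic) (hs : s.Nonempty)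
    (hsupp : G.support ⊆ s) (hconn : ∀ u ∈ s, ∀ v ∈ s, G.Reachable u v) :
    Nat.card G.edgeSet + 1 = Nat.card s := by
  have hconn' : (G.induce s).Connected := by
    have : Nonempty s := hs.to_subtype
    refine (connected_iff _).2 ⟨?_, this⟩
    rintro ⟨u, hu⟩ ⟨v, hv⟩
    obtain ⟨p⟩ := hconn u hu v hv
    by_cases hp : p.Nil
    · obtain rfl := hp.eq
      rfl
    exact ⟨p.induce s fun x hx => hsupp (mem_support_of_mem_walk_support p hp hx)⟩
  rw [← (isTree_iff_connected_and_card.1 ⟨hconn', hG.induce s⟩).2]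
  conv_lhs => rw [← (G.spanningCoe_induce_eq_self s).2 hsupp]
  rw [spanningCoe, edgeSet_map, Nat.card_image_of_injective (Function.Embedding.injective _)]

lemma IsAcyclic.not_reachable_deleteEdges_of_mem_edges [DecidableEq W] (hG : G.IsAcyclic)
    {u v : W} {p : G.Walk u v} (hp : p.IsPath) {e : Sym2 W} (he : e ∈ p.edges) :
    ¬ (G.deleteEdges {e}).Reachable u v := by
  rintro ⟨q⟩
  have hpq : p = (q.mapLe (deleteEdges_le _)).bypass :=
    congrArg Subtype.val ((hG.subsingleton_path u v).elim ⟨p, hp⟩ (q.mapLe _).toPath)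
  have he' : e ∈ q.edges := by
    rw [← Walk.edges_mapLe_eq_edges (deleteEdges_le {e})]
    exact Walk.edges_bypass_subset_edges _ (hpq ▸ he)
  simpa using q.edges_subset_edgeSet he'

lemma Walk.exists_mem_edges_not_reachable {u v : W} (p : G.Walk u v) (huv : ¬ H.Reachable u v) :
    ∃ x y, s(x, y) ∈ p.edges ∧ ¬ H.Reachable x y := by
  induction p with
  | nil => exact absurd Reachable.rfl huv
  | @cons u c v _ q ih =>
    by_cases huc : H.Reachable u c
    · obtain ⟨x, y, hxy, hn⟩ := ih fun hcv => huv (huc.trans hcv)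
      exact ⟨x, y, by simp [hxy], hn⟩
    · exact ⟨u, c, by simp, huc⟩

variable {E : Finset (Sym2 W)}

lemma natCard_edgeSet_fromEdgeSet (hE : ∀ e ∈ E, ¬ e.IsDiag) :
    Nat.card (fromEdgeSet (↑E : Set (Sym2 W))).edgeSet = E.card := by
  have hdisj : (↑E : Set (Sym2 W)) \ Sym2.diagSet = ↑E :=
    sdiff_eq_left.2 (Set.disjoint_left.2 fun e he hd => hE e he hd)
  rw [edgeSet_fromEdgeSet, hdisj, Nat.card_coe_set_eq, Set.ncard_coe_finset]

lemma mk_notMem_of_not_reachable {x y : W} (h : ¬ (fromEdgeSet (↑E : Set (Sym2 W))).Reachable x y) :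
    s(x, y) ∉ E := by
  intro hxy
  have hne : x ≠ y := by
    rintro rfl
    exact h .rfl
  exact h ((fromEdgeSet_adj _).2 ⟨hxy, hne⟩).reachable

lemma fromEdgeSet_erase [DecidableEq W] (f : Sym2 W) :
    fromEdgeSet (↑(E.erase f) : Set (Sym2 W)) = (fromEdgeSet ↑E).deleteEdges {f} := by
  rw [coe_erase, fromEdgeSet_sdiff]
  rfl

lemma fromEdgeSet_insert [DecidableEq W] (x y : W) :
    fromEdgeSet (↑(insert s(x, y) E) : Set (Sym2 W)) = fromEdgeSet ↑E ⊔ edge x y := by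
  rw [coe_insert, Set.insert_eq, fromEdgeSet_union, sup_comm]
  rfl

end SimpleGraph

section SpanningTree

variable {T : Finset (Sym2 V)}

lemma isTreeOn_univ_iff : IsTreeOn univ T ↔ (∀ e ∈ T, ¬ e.IsDiag) ∧
    (fromEdgeSet (↑T : Set (Sym2 V))).IsAcyclic ∧ T.card + 1 = Fintype.card V := by
  rw [IsTreeOn, card_univ]
  constructor
  · rintro ⟨-, hdiag, hcard, hreach⟩
    have : Nonempty V := Fintype.card_pos_iff.1 (by omega)
    have hconn : (fromEdgeSet (↑T : Set (Sym2 V))).Connected :=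
      (connected_iff _).2 ⟨fun u v => hreach u (mem_univ u) v (mem_univ v), this⟩
    refine ⟨hdiag, (isTree_iff_connected_and_card.2 ⟨hconn, ?_⟩).isAcyclic, hcard⟩
    rw [natCard_edgeSet_fromEdgeSet hdiag, Nat.card_eq_fintype_card, hcard]
  · rintro ⟨hdiag, hacyc, hcard⟩
    have htree := hacyc.isTree_of_card_edgeSet
      (by rw [natCard_edgeSet_fromEdgeSet hdiag, Nat.card_eq_fintype_card, hcard])
    exact ⟨fun _ _ _ _ => mem_univ _, hdiag, hcard,
      fun u _ v _ => htree.connected.preconnected u v⟩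

lemma IsTreeOn.isAcyclic (hT : IsTreeOn univ T) : (fromEdgeSet (↑T : Set (Sym2 V))).IsAcyclic :=
  (isTreeOn_univ_iff.1 hT).2.1

lemma IsTreeOn.not_reachable_erase (hT : IsTreeOn univ T) {a b : V} (hab : s(a, b) ∈ T) :
    ¬ (fromEdgeSet (↑(T.erase s(a, b)) : Set (Sym2 V))).Reachable a b := by
  have hne : a ≠ b := by simpa using hT.2.1 _ hab
  rw [fromEdgeSet_erase, ← isBridge_iff]
  exact isAcyclic_iff_forall_adj_isBridge.1 hT.isAcyclic ((fromEdgeSet_adj _).2 ⟨hab, hne⟩)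

lemma IsTreeOn.exists_mem_not_reachable_erase (hT : IsTreeOn univ T) {H : SimpleGraph V}
    {u v : V} (huv : ¬ H.Reachable u v) :
    ∃ x y, s(x, y) ∈ T ∧ ¬ H.Reachable x y ∧
      ¬ (fromEdgeSet (↑(T.erase s(x, y)) : Set (Sym2 V))).Reachable u v := by
  obtain ⟨p, hp⟩ := (hT.2.2.2 u (mem_univ u) v (mem_univ v)).exists_isPath
  obtain ⟨x, y, hxy, hH⟩ := p.exists_mem_edges_not_reachable huv
  refine ⟨x, y, ?_, hH, ?_⟩
  · simpa using (p.edges_subset_edgeSet hxy).1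
  · rw [fromEdgeSet_erase]
    exact hT.isAcyclic.not_reachable_deleteEdges_of_mem_edges hp hxy

lemma IsTreeOn.exchange (hT : IsTreeOn univ T) {f : Sym2 V} (hf : f ∈ T) {x y : V}
    (hxy : ¬ (fromEdgeSet (↑(T.erase f) : Set (Sym2 V))).Reachable x y) :
    IsTreeOn univ (insert s(x, y) (T.erase f)) := by
  have hne : x ≠ y := by
    rintro rfl
    exact hxy .rfl
  obtain ⟨hdiag, hacyc, hcard⟩ := isTreeOn_univ_iff.1 hT
  refine isTreeOn_univ_iff.2 ⟨?_, ?_, ?_⟩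
  · rintro e he
    rcases mem_insert.1 he with rfl | he
    · simpa using hne
    · exact hdiag e (mem_of_mem_erase he)
  · rw [fromEdgeSet_insert]
    exact (hacyc.anti (fromEdgeSet_mono (by simp))).sup_edge_of_not_reachable hxy
  · rw [card_insert_of_notMem (mk_notMem_of_not_reachable hxy), card_erase_add_one hf, hcard]

end SpanningTree

section MinimumSpanningTree

variable {w : Sym2 V → ℝ} {T : Finset (Sym2 V)}

def IsMST (w : Sym2 V → ℝ) (T : Finset (Sym2 V)) : Prop :=
  IsTreeOn univ T ∧ edgeCost w T = mstCostOn w univ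

lemma mstCostOn_le_edgeCost (hT : IsTreeOn univ T) : mstCostOn w univ ≤ edgeCost w T :=
  csInf_le ((Set.toFinite _).image _).bddBelow ⟨T, hT, rfl⟩

lemma exists_isMST (hT : IsTreeOn univ T) : ∃ T₀, IsMST w T₀ := by
  have hne : (edgeCost w '' {T | IsTreeOn univ T}).Nonempty := ⟨_, T, hT, rfl⟩
  obtain ⟨T₀, hT₀, h⟩ := hne.csInf_mem ((Set.toFinite _).image _)
  exact ⟨T₀, hT₀, h⟩

lemma edgeCost_insert_erase {e f : Sym2 V} (hf : f ∈ T) (he : e ∉ T.erase f) :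
    edgeCost w (insert e (T.erase f)) = edgeCost w T - w f + w e := by
  rw [edgeCost, edgeCost, sum_insert he, sum_erase_eq_sub hf]
  ring

lemma IsMST.le_of_exchange (hT : IsMST w T) {f : Sym2 V} (hf : f ∈ T) {x y : V}
    (hxy : ¬ (fromEdgeSet (↑(T.erase f) : Set (Sym2 V))).Reachable x y) : w f ≤ w s(x, y) := by
  have := mstCostOn_le_edgeCost (w := w) (hT.1.exchange hf hxy)
  rw [edgeCost_insert_erase hf (mk_notMem_of_not_reachable hxy), hT.2] at this
  linarith

lemma IsMST.exchange (hT : IsMST w T) {f : Sym2 V} (hf : f ∈ T) {x y : V}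
    (hxy : ¬ (fromEdgeSet (↑(T.erase f) : Set (Sym2 V))).Reachable x y) (hle : w s(x, y) ≤ w f) :
    IsMST w (insert s(x, y) (T.erase f)) := by
  have htree := hT.1.exchange hf hxy
  refine ⟨htree, le_antisymm ?_ (mstCostOn_le_edgeCost htree)⟩
  rw [edgeCost_insert_erase hf (mk_notMem_of_not_reachable hxy), hT.2]
  linarith

end MinimumSpanningTree

section Contraction

variable {w : Sym2 V → ℝ} {S : Finset V}

lemma mk_mem_rpairs {a b : V} : s(a, b) ∈ Rpairs S ↔ a ∈ S ∧ b ∈ S ∧ a ≠ b := by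
  constructor
  · rintro ⟨u, hu, v, hv, hne, heq⟩
    rcases Sym2.eq_iff.1 heq with ⟨rfl, rfl⟩ | ⟨rfl, rfl⟩
    · exact ⟨hu, hv, hne⟩
    · exact ⟨hv, hu, hne.symm⟩
  · rintro ⟨ha, hb, hne⟩
    exact ⟨a, ha, b, hb, hne, rfl⟩

lemma contractWeight_of_mem {e : Sym2 V} (he : e ∈ Rpairs S) : contractWeight w S e = 0 := by
  rw [contractWeight, if_pos he]

lemma contractWeight_of_notMem {e : Sym2 V} (he : e ∉ Rpairs S) :
    contractWeight w S e = w e := by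
  rw [contractWeight, if_neg he]

lemma contractWeight_nonneg (hw : ∀ e, 0 ≤ w e) (e : Sym2 V) : 0 ≤ contractWeight w S e := by
  rw [contractWeight]
  split_ifs
  exacts [le_rfl, hw e]

lemma contractWeight_le (hw : ∀ e, 0 ≤ w e) (e : Sym2 V) : contractWeight w S e ≤ w e := by
  rw [contractWeight]
  split_ifs
  exacts [hw e, le_rfl]

open Classical in
noncomputable def terminalEdges (S : Finset V) (T : Finset (Sym2 V)) : Finset (Sym2 V) :=
  T.filter (· ∈ Rpairs S)

lemma mem_terminalEdges {T : Finset (Sym2 V)} {e : Sym2 V} :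
    e ∈ terminalEdges S T ↔ e ∈ T ∧ e ∈ Rpairs S := by
  classical
  rw [terminalEdges, mem_filter]

lemma edgeCost_contractWeight (T : Finset (Sym2 V)) :
    edgeCost (contractWeight w S) T = edgeCost w (T \ terminalEdges S T) := by
  classical
  rw [edgeCost, edgeCost, ← sum_filter_add_sum_filter_not T (· ∈ Rpairs S),
    sum_eq_zero fun e he => contractWeight_of_mem (mem_filter.1 he).2, zero_add, filter_not]
  exact sum_congr rfl fun e he => contractWeight_of_notMem
    fun h => (mem_sdiff.1 he).2 (mem_terminalEdges.2 ⟨(mem_sdiff.1 he).1, h⟩)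

lemma card_terminalEdges {T : Finset (Sym2 V)} (hT : IsTreeOn univ T)
    (hconn : ∀ u ∈ S, ∀ v ∈ S, (fromEdgeSet (↑(terminalEdges S T) : Set (Sym2 V))).Reachable u v) :
    (terminalEdges S T).card = S.card - 1 := by
  rcases S.eq_empty_or_nonempty with rfl | hS
  · refine card_eq_zero.2 (eq_empty_of_forall_notMem fun e he => ?_)
    obtain ⟨u, hu, -⟩ := (mem_terminalEdges.1 he).2
    simp at hu
  have hsub : terminalEdges S T ⊆ T := fun e he => (mem_terminalEdges.1 he).1
  have hsupp : (fromEdgeSet (↑(terminalEdges S T) : Set (Sym2 V))).support ⊆ ↑S := by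
    rintro x ⟨y, hxy⟩
    exact (mk_mem_rpairs.1 (mem_terminalEdges.1 ((fromEdgeSet_adj _).1 hxy).1).2).1
  have := (hT.isAcyclic.anti (fromEdgeSet_mono (coe_subset.2 hsub))).card_edgeSet_add_one
    (coe_nonempty.2 hS) hsupp hconn
  rw [natCard_edgeSet_fromEdgeSet fun e he => hT.2.1 e (hsub he), Nat.card_coe_set_eq,
    Set.ncard_coe_finset] at this
  omega

lemma exists_isMST_contractWeight (hw : ∀ e, 0 ≤ w e) {T : Finset (Sym2 V)} (hT : IsMST w T) :
    ∃ Ts, IsMST (contractWeight w S) Ts ∧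
      (∀ u ∈ S, ∀ v ∈ S, (fromEdgeSet (↑(terminalEdges S Ts) : Set (Sym2 V))).Reachable u v) ∧
      ∀ e ∈ Ts, e ∉ Rpairs S → e ∈ T := by
  classical
  let φ : Sym2 V → ℝ := fun e => (if e ∈ Rpairs S then 2 else 0) + (if e ∈ T then 1 else 0)
  obtain ⟨Ts, hTs, hmax⟩ := Set.exists_max_image {Ts | IsMST (contractWeight w S) Ts} (edgeCost φ)
    (Set.toFinite _) (exists_isMST hT.1)
  have no_exchange : ∀ f ∈ Ts, ∀ x y,
      ¬ (fromEdgeSet (↑(Ts.erase f) : Set (Sym2 V))).Reachable x y →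
      contractWeight w S s(x, y) ≤ contractWeight w S f → φ s(x, y) ≤ φ f := by
    intro f hf x y hxy hle
    have := hmax _ (IsMST.exchange hTs hf hxy hle)
    rw [edgeCost_insert_erase hf (mk_notMem_of_not_reachable hxy)] at this
    linarith
  refine ⟨Ts, hTs, fun u hu v hv => ?_, fun e he heS => ?_⟩
  · by_contra huv
    obtain ⟨x, y, hxy, hnot, hsep⟩ := hTs.1.exists_mem_not_reachable_erase huv
    have hne : u ≠ v := by
      rintro rfl
      exact huv .rfl
    have hxyS : s(x, y) ∉ Rpairs S := fun h =>
      hnot ((fromEdgeSet_adj _).2 ⟨mem_terminalEdges.2 ⟨hxy, h⟩, (mk_mem_rpairs.1 h).2.2⟩).reachable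
    have huvS : s(u, v) ∈ Rpairs S := mk_mem_rpairs.2 ⟨hu, hv, hne⟩
    have := no_exchange _ hxy u v hsep
      (by rw [contractWeight_of_mem huvS]; exact contractWeight_nonneg hw _)
    simp only [φ, if_pos huvS, if_neg hxyS] at this
    split_ifs at this <;> linarith
  · by_contra heT
    induction e with
    | h u v =>
    obtain ⟨x, y, hxy, hnot, hsep⟩ :=
      hT.1.exists_mem_not_reachable_erase (hTs.1.not_reachable_erase he)
    have hle : contractWeight w S s(x, y) ≤ contractWeight w S s(u, v) := calc
      contractWeight w S s(x, y) ≤ w s(x, y) := contractWeight_le hw _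
      _ ≤ w s(u, v) := hT.le_of_exchange hxy hsep
      _ = contractWeight w S s(u, v) := (contractWeight_of_notMem heS).symm
    have := no_exchange _ he x y hnot hle
    simp only [φ, if_neg heS, if_neg heT, if_pos hxy] at this
    split_ifs at this <;> linarith

end Contraction

theorem save_decomposes_into_save_edges_general
    (w : Sym2 V → ℝ) (hw : ∀ e, 0 ≤ w e)
    (S : Finset V)
    (T : Finset (Sym2 V)) (hT : IsTreeOn Finset.univ T)
    (hTmst : edgeCost w T = mstCostOn w Finset.univ) :
    ∃ (D Z : Finset (Sym2 V)),
      D ⊆ T ∧ D.card = S.card - 1 ∧ (∀ e ∈ Z, e ∈ Rpairs S) ∧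
      IsTreeOn Finset.univ ((T \ D) ∪ Z) ∧
      edgeCost (contractWeight w S) ((T \ D) ∪ Z)
        = mstCostOn (contractWeight w S) Finset.univ ∧
      mstCostOn w Finset.univ - mstCostOn (contractWeight w S) Finset.univ
        = edgeCost w D := by
  obtain ⟨Ts, hTs, hconn, hkept⟩ := exists_isMST_contractWeight (S := S) hw ⟨hT, hTmst⟩
  set Z := terminalEdges S Ts
  have hZ : Z ⊆ Ts := fun e he => (mem_terminalEdges.1 he).1
  have hK : Ts \ Z ⊆ T := by
    intro e he
    obtain ⟨heTs, heZ⟩ := mem_sdiff.1 he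
    exact hkept e heTs fun h => heZ (mem_terminalEdges.2 ⟨heTs, h⟩)
  have hTs_eq : T \ (T \ (Ts \ Z)) ∪ Z = Ts := by
    rw [Finset.sdiff_sdiff_eq_self hK, sdiff_union_of_subset hZ]
  refine ⟨T \ (Ts \ Z), Z, sdiff_subset, ?_, fun e he => (mem_terminalEdges.1 he).2,
    by rw [hTs_eq]; exact hTs.1, by rw [hTs_eq]; exact hTs.2, ?_⟩
  · have hcard : T.card = Ts.card := Nat.add_right_cancel (hT.2.2.1.trans hTs.1.2.2.1.symm)
    have hZcard : Z.card = S.card - 1 := card_terminalEdges hTs.1 hconn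
    have := card_le_card hZ
    rw [card_sdiff_of_subset hK, card_sdiff_of_subset hZ]
    omega
  · rw [← hTmst, ← hTs.2, edgeCost_contractWeight, edgeCost, edgeCost, edgeCost,
      ← sum_sdiff hK]
    ring

/-- For a full component `C` with terminal set `S` (`|S| ≥ 2`) and
a weighted complete graph `M` (weights `w`, MST `T`), the save of `C` decomposes
into save edges: there are `|S| − 1` edges `D ⊆ T` (the removed maximum-cost path
edges) and zero-cost edges `Z` between terminals of `S` such that `(T \ D) ∪ Z` is
a minimum spanning tree of the contraction `M/C`, and
`save(M, C) = d(MST(M)) − d(MST(M/C))` equals the total cost of the removed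
edges `D`. -/
theorem save_decomposes_into_save_edges
    (w : Sym2 V → ℝ) (hw : ∀ e, 0 ≤ w e)
    (S : Finset V) (hS : 2 ≤ S.card)
    (T : Finset (Sym2 V)) (hT : IsTreeOn Finset.univ T)
    (hTmst : edgeCost w T = mstCostOn w Finset.univ) :
    ∃ (D Z : Finset (Sym2 V)),
      D ⊆ T ∧ D.card = S.card - 1 ∧ (∀ e ∈ Z, e ∈ Rpairs S) ∧
      IsTreeOn Finset.univ ((T \ D) ∪ Z) ∧
      edgeCost (contractWeight w S) ((T \ D) ∪ Z)
        = mstCostOn (contractWeight w S) Finset.univ ∧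
      mstCostOn w Finset.univ - mstCostOn (contractWeight w S) Finset.univ
        = edgeCost w D :=
  save_decomposes_into_save_edges_general w hw S T hT hTmst
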